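/- Let d ≥ 2. A unimodular lattice Λ ⊆ K̃^d is well rounded if and only if Λ = uR^d for some matrix u with all entries in O and |det u| = 1. In other words, the set of well rounded unimodular lattices equals GL_d(O)·R^d (denoted SL_d(O)R^d in the paper). -/

import Mathlib

noncomputable section

open scoped Classical

variable (Fq : Type) [Field Fq] [Fintype Fq]

/-- `K̃ = 𝔽_q((x⁻¹))`, realized as formal Laurent series in `t = x⁻¹`. -/
abbrev Kt := LaurentSeries Fq

/-- The element `x` of `K̃` (the inverse of the Laurent series variable). -/
def Kx : Kt Fq := HahnSeries.single (-1 : ℤ) 1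

/-- Absolute value `|f| = q^{deg f}`, i.e. `q^{-order f}` in terms of `t = x⁻¹`. -/
def Kabs (f : Kt Fq) : ℝ := if f = 0 then 0 else (Fintype.card Fq : ℝ) ^ (-f.order)

/-- The ring embedding of `R = 𝔽_q[x]` into `K̃`. -/
def polyK : Polynomial Fq →+* Kt Fq := (Polynomial.aeval (Kx Fq)).toRingHom

/-- Sup norm on `K̃^d`. -/
def vnorm {d : ℕ} (v : Fin d → Kt Fq) : ℝ := ⨆ i, Kabs Fq (v i)

/-- The lattice `g·R^d`. -/
def lattice {d : ℕ} (g : Matrix (Fin d) (Fin d) (Kt Fq)) : Set (Fin d → Kt Fq) :=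
  {v | ∃ c : Fin d → Polynomial Fq, v = g.mulVec fun j => polyK Fq (c j)}

/-- `i`-th successive minimum of `Λ` with respect to a norm `nrm`: the least `r > 0` such that
`Λ` contains `i` linearly independent vectors of norm at most `r`. -/
def minimaN {d : ℕ} (nrm : (Fin d → Kt Fq) → ℝ) (Λ : Set (Fin d → Kt Fq)) (i : ℕ) : ℝ :=
  sInf {r : ℝ | 0 < r ∧ ∃ v : Fin i → Fin d → Kt Fq,
    (∀ j, v j ∈ Λ) ∧ LinearIndependent (Kt Fq) v ∧ ∀ j, nrm (v j) ≤ r}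

/-- `i`-th successive minimum with respect to the sup norm. -/
def minima {d : ℕ} (Λ : Set (Fin d → Kt Fq)) (i : ℕ) : ℝ := minimaN Fq (vnorm Fq) Λ i

/-- Covering radius of `Λ` with respect to the norm `nrm`. -/
def covRad {d : ℕ} (nrm : (Fin d → Kt Fq) → ℝ) (Λ : Set (Fin d → Kt Fq)) : ℝ :=
  ⨆ w : Fin d → Kt Fq, ⨅ u : Λ, nrm (w - u.1)

/-- Length of the shortest nonzero vector of `Λ`. -/
def ell {d : ℕ} (Λ : Set (Fin d → Kt Fq)) : ℝ :=
  sInf {r : ℝ | ∃ v ∈ Λ, v ≠ 0 ∧ vnorm Fq v = r}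

/-- `Λ` is well rounded: it contains `d` linearly independent vectors of norm `ℓ(Λ)`. -/
def IsWellRounded {d : ℕ} (Λ : Set (Fin d → Kt Fq)) : Prop :=
  ∃ v : Fin d → Fin d → Kt Fq, (∀ j, v j ∈ Λ) ∧ LinearIndependent (Kt Fq) v ∧
    ∀ j, vnorm Fq (v j) = ell Fq Λ

/-- The multiplicative "norm" `N(v) = ∏ |v i|`. -/
def Nprod {d : ℕ} (v : Fin d → Kt Fq) : ℝ := ∏ i, Kabs Fq (v i)

/-- The Minkowski function `μ(Λ) = sup_w inf_{u ∈ Λ} N(w - u)`. -/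
def mink {d : ℕ} (Λ : Set (Fin d → Kt Fq)) : ℝ :=
  ⨆ w : Fin d → Kt Fq, ⨅ u : Λ, Nprod Fq (w - u.1)


/-!
Call a basis `h` of a lattice reduced when the ultrametric Hadamard inequality
`|det h| ≤ ∏ⱼ ‖hⱼ‖` is an equality. Every lattice has a reduced basis: scale each column to norm
`1` and reduce modulo `x⁻¹`; if the inequality is strict, the resulting matrix over `𝔽_q` is
singular, and a kernel vector gives a unimodular column operation that divides the norm of one
column by at least `q`. In a reduced basis `‖h c‖ ≥ |c_k| ‖h_k‖`, so a shortest vector with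
nonzero `k`-th coordinate forces `‖h_k‖ ≤ ℓ(Λ)`. For a well rounded unimodular `Λ`, `d`
independent shortest vectors give `‖h_k‖ = ℓ(Λ)` for every `k`, hence `ℓ(Λ)^d = |det h| = 1` and
the entries of `h` lie in `O`. Conversely, a matrix over `O` with `|det| = 1` is a reduced basis
with columns of norm `1`, so `ℓ = 1` and its columns witness well roundedness.
-/

section

open Matrix

variable {Fq : Type} [Field Fq]

lemma polyK_monomial (n : ℕ) (a : Fq) :
    polyK Fq (Polynomial.monomial n a) = HahnSeries.single (-(n : ℤ)) a := by
  simp [polyK, Kx, HahnSeries.single_pow, LaurentSeries.algebraMap_apply, HahnSeries.C_apply,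
    HahnSeries.single_mul_single]

lemma coeff_polyK (p : Polynomial Fq) (n : ℕ) :
    (polyK Fq p).coeff (-(n : ℤ)) = p.coeff n := by
  induction p using Polynomial.induction_on' with
  | add p r hp hr => rw [map_add, HahnSeries.coeff_add, hp, hr, Polynomial.coeff_add]
  | monomial m a =>
    rw [polyK_monomial, HahnSeries.coeff_single, Polynomial.coeff_monomial]
    simp [eq_comm]

lemma Matrix.col_ne_zero_of_det_ne_zero {R n : Type*} [CommRing R] [Fintype n] [DecidableEq n]
    {M : Matrix n n R} (hM : M.det ≠ 0) (j : n) : M.col j ≠ 0 :=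
  fun h0 => hM (det_eq_zero_of_column_eq_zero j fun i => congrFun h0 i)

lemma exists_apply_ne_zero_of_linearIndependent {K n : Type*} [Field K] [Fintype n]
    [DecidableEq n] {w : n → n → K} (hw : LinearIndependent K w) (k : n) : ∃ i, w i k ≠ 0 := by
  by_contra! h
  have hu : IsUnit (of w) := linearIndependent_rows_iff_isUnit.mp hw
  exact ((isUnit_iff_isUnit_det _).mp hu).ne_zero
    (det_eq_zero_of_column_eq_zero k h)

section Lattices

variable {d : ℕ}

lemma col_mem_lattice (g : Matrix (Fin d) (Fin d) (Kt Fq)) (j : Fin d) :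
    g.col j ∈ lattice Fq g :=
  ⟨Pi.single j 1, by rw [← mulVec_single_one]; congr 1; ext l; simp [Pi.single_apply]⟩

lemma lattice_mul_map_polyK (g : Matrix (Fin d) (Fin d) (Kt Fq))
    {B : Matrix (Fin d) (Fin d) (Polynomial Fq)} (hB : IsUnit B.det) :
    lattice Fq (g * B.map (polyK Fq)) = lattice Fq g := by
  have hmap (c : Fin d → Polynomial Fq) :
      B.map (polyK Fq) *ᵥ (fun j => polyK Fq (c j)) = fun i => polyK Fq ((B *ᵥ c) i) :=
    funext fun i => (RingHom.map_mulVec (polyK Fq) B c i).symm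
  ext v
  constructor
  · rintro ⟨c, rfl⟩
    exact ⟨B *ᵥ c, by rw [← mulVec_mulVec, hmap]⟩
  · rintro ⟨c, rfl⟩
    refine ⟨B⁻¹ *ᵥ c, ?_⟩
    rw [← mulVec_mulVec, hmap, mulVec_mulVec, mul_nonsing_inv _ hB,
      one_mulVec]

end Lattices

variable [Fintype Fq]

local notation "q" => (Fintype.card Fq : ℝ)

lemma one_lt_card_real : 1 < q := by exact_mod_cast Fintype.one_lt_card

@[simp]
lemma Kabs_zero : Kabs Fq 0 = 0 := if_pos rfl

lemma Kabs_of_ne_zero {f : Kt Fq} (hf : f ≠ 0) : Kabs Fq f = q ^ (-f.order) := if_neg hf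

lemma Kabs_nonneg (f : Kt Fq) : 0 ≤ Kabs Fq f := by
  unfold Kabs; split_ifs <;> positivity

lemma Kabs_pos {f : Kt Fq} (hf : f ≠ 0) : 0 < Kabs Fq f := by
  rw [Kabs_of_ne_zero hf]; positivity

lemma ne_zero_of_Kabs_eq_one {f : Kt Fq} (hf : Kabs Fq f = 1) : f ≠ 0 := by
  rintro rfl
  simp at hf

lemma Kabs_one : Kabs Fq 1 = 1 := by
  rw [Kabs_of_ne_zero one_ne_zero, HahnSeries.order_one, neg_zero, zpow_zero]

lemma Kabs_mul (f g : Kt Fq) : Kabs Fq (f * g) = Kabs Fq f * Kabs Fq g := by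
  by_cases hf : f = 0
  · simp [hf]
  by_cases hg : g = 0
  · simp [hg]
  rw [Kabs_of_ne_zero (mul_ne_zero hf hg), Kabs_of_ne_zero hf, Kabs_of_ne_zero hg,
    HahnSeries.order_mul hf hg, neg_add, zpow_add₀ (by positivity)]

lemma Kabs_neg (f : Kt Fq) : Kabs Fq (-f) = Kabs Fq f := by
  by_cases hf : f = 0
  · simp [hf]
  · rw [Kabs_of_ne_zero (neg_ne_zero.mpr hf), Kabs_of_ne_zero hf, HahnSeries.order_neg]

lemma Kabs_add_le (f g : Kt Fq) : Kabs Fq (f + g) ≤ max (Kabs Fq f) (Kabs Fq g) := by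
  by_cases h : f + g = 0
  · simpa [h] using le_max_of_le_left (Kabs_nonneg f)
  by_cases hf : f = 0
  · simp [hf]
  by_cases hg : g = 0
  · simp [hg]
  rw [Kabs_of_ne_zero h, Kabs_of_ne_zero hf, Kabs_of_ne_zero hg,
    ← (zpow_right_strictMono₀ one_lt_card_real).monotone.map_max, max_neg_neg]
  exact zpow_le_zpow_right₀ one_lt_card_real.le
    (neg_le_neg (HahnSeries.min_order_le_order_add h))

lemma Kabs_sum_le {ι : Type*} (s : Finset ι) (f : ι → Kt Fq) {r : ℝ} (hr : 0 ≤ r)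
    (h : ∀ i ∈ s, Kabs Fq (f i) ≤ r) : Kabs Fq (∑ i ∈ s, f i) ≤ r :=
  Finset.sum_induction f (fun x => Kabs Fq x ≤ r)
    (fun x y hx hy => (Kabs_add_le x y).trans (max_le hx hy)) (by simpa using hr) h

lemma Kabs_prod {ι : Type*} (s : Finset ι) (f : ι → Kt Fq) :
    Kabs Fq (∏ i ∈ s, f i) = ∏ i ∈ s, Kabs Fq (f i) :=
  map_prod (⟨⟨Kabs Fq, Kabs_one⟩, Kabs_mul⟩ : Kt Fq →* ℝ) f s

lemma Kabs_units_int_smul (u : ℤˣ) (f : Kt Fq) : Kabs Fq (u • f) = Kabs Fq f := by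
  rcases Int.units_eq_one_or u with rfl | rfl <;> simp [Units.smul_def, Kabs_neg]

lemma Kabs_le_zpow_iff {f : Kt Fq} {n : ℤ} :
    Kabs Fq f ≤ q ^ (-n) ↔ ∀ m < n, f.coeff m = 0 := by
  by_cases hf : f = 0
  · simp only [hf, Kabs_zero, HahnSeries.coeff_zero, implies_true, iff_true]
    positivity
  rw [Kabs_of_ne_zero hf, zpow_le_zpow_iff_right₀ one_lt_card_real, neg_le_neg_iff]
  refine ⟨fun h m hm => HahnSeries.coeff_eq_zero_of_lt_order (hm.trans_le h), fun h => ?_⟩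
  by_contra! hlt
  exact hf (HahnSeries.coeff_order_eq_zero.mp (h _ hlt))

lemma zpow_le_Kabs {f : Kt Fq} {n : ℤ} (h : f.coeff n ≠ 0) : q ^ (-n) ≤ Kabs Fq f := by
  have hf : f ≠ 0 := by rintro rfl; exact h HahnSeries.coeff_zero
  rw [Kabs_of_ne_zero hf, zpow_le_zpow_iff_right₀ one_lt_card_real, neg_le_neg_iff]
  exact HahnSeries.order_le_of_coeff_ne_zero h

lemma Kabs_single (n : ℤ) {a : Fq} (ha : a ≠ 0) :
    Kabs Fq (HahnSeries.single n a) = q ^ (-n) := by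
  rw [Kabs_of_ne_zero (HahnSeries.single_ne_zero ha), HahnSeries.order_single ha]

lemma Kabs_coe_powerSeries_le_inv (F : PowerSeries Fq) (hF : PowerSeries.constantCoeff F = 0) :
    Kabs Fq (F : Kt Fq) ≤ q ^ (-1 : ℤ) := by
  rw [Kabs_le_zpow_iff]
  intro m hm
  rcases (show m ≤ 0 by omega).lt_or_eq with hm | rfl
  · simp [PowerSeries.coeff_coe, hm]
  · simpa [PowerSeries.coeff_coe] using hF

lemma one_le_Kabs_coe_powerSeries (F : PowerSeries Fq) (hF : PowerSeries.constantCoeff F ≠ 0) :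
    1 ≤ Kabs Fq (F : Kt Fq) := by
  rw [← zpow_zero q, ← neg_zero]
  exact zpow_le_Kabs (by simpa [PowerSeries.coeff_coe] using hF)

lemma exists_coe_powerSeries_eq {f : Kt Fq} (hf : Kabs Fq f ≤ 1) :
    ∃ F : PowerSeries Fq, (F : Kt Fq) = f := by
  rw [← zpow_zero q, ← neg_zero, Kabs_le_zpow_iff] at hf
  rw [← LaurentSeries.val_le_one_iff_eq_coe, ← WithZero.exp_zero, ← neg_zero,
    LaurentSeries.valuation_le_iff_coeff_lt_eq_zero]
  exact hf

lemma one_le_Kabs_polyK {p : Polynomial Fq} (hp : p ≠ 0) : 1 ≤ Kabs Fq (polyK Fq p) := by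
  rw [← zpow_zero q, ← neg_zero]
  refine le_trans ?_ (zpow_le_Kabs (n := -p.natDegree) (by
    rw [coeff_polyK]; exact Polynomial.leadingCoeff_ne_zero.mpr hp))
  exact zpow_le_zpow_right₀ one_lt_card_real.le (by simp)

lemma Kabs_polyK_of_isUnit {p : Polynomial Fq} (hp : IsUnit p) : Kabs Fq (polyK Fq p) = 1 := by
  obtain ⟨u, rfl⟩ := hp
  have h1 : 1 ≤ Kabs Fq (polyK Fq u) := one_le_Kabs_polyK u.ne_zero
  have h2 : 1 ≤ Kabs Fq (polyK Fq ↑u⁻¹) := one_le_Kabs_polyK u⁻¹.ne_zero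
  have h := Kabs_mul (polyK Fq u) (polyK Fq ↑u⁻¹)
  rw [← map_mul, Units.mul_inv, map_one, Kabs_one] at h
  nlinarith

section Vectors

variable {d : ℕ}

lemma Kabs_le_vnorm (v : Fin d → Kt Fq) (i : Fin d) : Kabs Fq (v i) ≤ vnorm Fq v :=
  le_ciSup (f := fun i => Kabs Fq (v i)) (Set.finite_range _).bddAbove i

lemma vnorm_nonneg (v : Fin d → Kt Fq) : 0 ≤ vnorm Fq v :=
  Real.iSup_nonneg fun i => Kabs_nonneg (v i)

lemma vnorm_le {v : Fin d → Kt Fq} {r : ℝ} (hr : 0 ≤ r) (h : ∀ i, Kabs Fq (v i) ≤ r) :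
    vnorm Fq v ≤ r :=
  Real.iSup_le h hr

lemma vnorm_pos {v : Fin d → Kt Fq} (hv : v ≠ 0) : 0 < vnorm Fq v := by
  obtain ⟨i, hi⟩ := Function.ne_iff.mp hv
  exact (Kabs_pos hi).trans_le (Kabs_le_vnorm v i)

lemma exists_vnorm_eq_zpow {v : Fin d → Kt Fq} (hv : v ≠ 0) : ∃ m : ℤ, vnorm Fq v = q ^ m := by
  have : Nonempty (Fin d) := ⟨(Function.ne_iff.mp hv).choose⟩
  obtain ⟨i, hi⟩ := exists_eq_ciSup_of_finite (f := fun i => Kabs Fq (v i))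
  have hvi : v i ≠ 0 := fun h0 => (vnorm_pos hv).ne' (by simpa [vnorm, h0] using hi.symm)
  exact ⟨-(v i).order, hi.symm.trans (Kabs_of_ne_zero hvi)⟩

lemma Kabs_det_le_prod_vnorm_col (M : Matrix (Fin d) (Fin d) (Kt Fq)) :
    Kabs Fq M.det ≤ ∏ j, vnorm Fq (M.col j) := by
  rw [Matrix.det_apply]
  refine Kabs_sum_le _ _ (Finset.prod_nonneg fun j _ => vnorm_nonneg _) fun σ _ => ?_
  rw [Kabs_units_int_smul, Kabs_prod]
  exact Finset.prod_le_prod (fun i _ => Kabs_nonneg _) fun i _ => Kabs_le_vnorm (M.col i) (σ i)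

lemma prod_vnorm_col_updateCol (M : Matrix (Fin d) (Fin d) (Kt Fq)) (k : Fin d)
    (v : Fin d → Kt Fq) :
    ∏ j, vnorm Fq ((M.updateCol k v).col j) =
      vnorm Fq v * ∏ j ∈ Finset.univ.erase k, vnorm Fq (M.col j) := by
  rw [← Finset.mul_prod_erase _ _ (Finset.mem_univ k)]
  congr 1
  · congr 1; ext i; simp [Matrix.col_apply]
  · refine Finset.prod_congr rfl fun j hj => ?_
    congr 1; ext i; simp [Matrix.col_apply, Finset.ne_of_mem_erase hj]

end Vectors

section Reduced

variable {d : ℕ}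

def IsReducedBasis (g : Matrix (Fin d) (Fin d) (Kt Fq)) : Prop :=
  Kabs Fq g.det = ∏ j, vnorm Fq (g.col j)

lemma IsReducedBasis.Kabs_mul_vnorm_col_le {g : Matrix (Fin d) (Fin d) (Kt Fq)}
    (hg : IsReducedBasis g) (hdet : g.det ≠ 0) (c : Fin d → Kt Fq) (k : Fin d) :
    Kabs Fq (c k) * vnorm Fq (g.col k) ≤ vnorm Fq (g *ᵥ c) := by
  have hdet' : (g.updateCol k (g *ᵥ c)).det = c k * g.det := by
    rw [← smul_eq_mul, ← det_updateCol_sum g k c]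
    congr 2; ext i; simp [mulVec, dotProduct, mul_comm]
  have hP : 0 < ∏ j ∈ Finset.univ.erase k, vnorm Fq (g.col j) :=
    Finset.prod_pos fun j _ => vnorm_pos (g.col_ne_zero_of_det_ne_zero hdet j)
  have had := Kabs_det_le_prod_vnorm_col (g.updateCol k (g *ᵥ c))
  rw [hdet', Kabs_mul, hg, prod_vnorm_col_updateCol,
    ← Finset.mul_prod_erase _ _ (Finset.mem_univ k), ← mul_assoc] at had
  exact le_of_mul_le_mul_right had hP

lemma IsReducedBasis.vnorm_col_le {g : Matrix (Fin d) (Fin d) (Kt Fq)} (hg : IsReducedBasis g)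
    (hdet : g.det ≠ 0) {c : Fin d → Polynomial Fq} {k : Fin d} (hk : c k ≠ 0) :
    vnorm Fq (g.col k) ≤ vnorm Fq (g *ᵥ fun j => polyK Fq (c j)) :=
  (le_mul_of_one_le_left (vnorm_nonneg _) (one_le_Kabs_polyK hk)).trans
    (hg.Kabs_mul_vnorm_col_le hdet (fun j => polyK Fq (c j)) k)

lemma Kabs_det_map_polyK {B : Matrix (Fin d) (Fin d) (Polynomial Fq)} (hB : IsUnit B.det) :
    Kabs Fq (B.map (polyK Fq)).det = 1 := by
  rw [← RingHom.mapMatrix_apply, ← RingHom.map_det]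
  exact Kabs_polyK_of_isUnit hB

/-- Scaling column `j` by `HahnSeries.single (m j) 1 = x ^ (-m j)` moves it into
`O = 𝔽_q[[x⁻¹]]`, the image of `PowerSeries Fq`. -/
lemma exists_powerSeries_normalization {g : Matrix (Fin d) (Fin d) (Kt Fq)} {m : Fin d → ℤ}
    (hm : ∀ i j, Kabs Fq (g i j) ≤ q ^ m j) :
    ∃ G : Matrix (Fin d) (Fin d) (PowerSeries Fq),
      ∀ i j, (G i j : Kt Fq) = g i j * HahnSeries.single (m j) 1 := by
  have hle (i j : Fin d) : Kabs Fq (g i j * HahnSeries.single (m j) 1) ≤ 1 := by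
    rw [Kabs_mul, Kabs_single _ one_ne_zero]
    refine (mul_le_mul_of_nonneg_right (hm i j) (by positivity)).trans_eq ?_
    rw [← zpow_add₀ (by positivity), add_neg_cancel, zpow_zero]
  choose G hG using fun i j => exists_coe_powerSeries_eq (hle i j)
  exact ⟨G, hG⟩

lemma isReducedBasis_of_det_residue_ne_zero {g : Matrix (Fin d) (Fin d) (Kt Fq)}
    {m : Fin d → ℤ} (hm : ∀ j, vnorm Fq (g.col j) = q ^ m j)
    {G : Matrix (Fin d) (Fin d) (PowerSeries Fq)}
    (hG : ∀ i j, (G i j : Kt Fq) = g i j * HahnSeries.single (m j) 1)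
    (hW : (G.map PowerSeries.constantCoeff).det ≠ 0) : IsReducedBasis g := by
  have hcoe : (G.det : Kt Fq) = g.det * ∏ j, HahnSeries.single (m j) (1 : Fq) := by
    rw [← det_diagonal, ← det_mul]
    refine (RingHom.map_det (HahnSeries.ofPowerSeries ℤ Fq) G).trans (congrArg det ?_)
    ext i j; simp [mul_diagonal, hG]
  have h1 := one_le_Kabs_coe_powerSeries G.det (by rwa [RingHom.map_det])
  rw [hcoe, Kabs_mul, Kabs_prod] at h1
  simp only [Kabs_single _ one_ne_zero, _root_.zpow_neg, Finset.prod_inv_distrib] at h1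
  refine le_antisymm (Kabs_det_le_prod_vnorm_col g) ?_
  rw [Finset.prod_congr rfl fun j _ => hm j]
  rwa [← div_eq_mul_inv, one_le_div (Finset.prod_pos fun j _ => by positivity)] at h1

lemma vnorm_mulVec_le_of_residue {g : Matrix (Fin d) (Fin d) (Kt Fq)} {m : Fin d → ℤ}
    {G : Matrix (Fin d) (Fin d) (PowerSeries Fq)}
    (hG : ∀ i j, (G i j : Kt Fq) = g i j * HahnSeries.single (m j) 1) {a : Fin d → Fq}
    (ha : G.map PowerSeries.constantCoeff *ᵥ a = 0) {k : Fin d}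
    (hk : ∀ l, a l ≠ 0 → m l ≤ m k) :
    vnorm Fq (g *ᵥ fun l => polyK Fq (Polynomial.C (a l) * Polynomial.X ^ (m k - m l).toNat)) ≤
      q ^ (m k - 1) := by
  refine vnorm_le (by positivity) fun i => ?_
  have hterm (l : Fin d) :
      polyK Fq (Polynomial.C (a l) * Polynomial.X ^ (m k - m l).toNat) *
        HahnSeries.single (m k) 1 = HahnSeries.single (m l) 1 * HahnSeries.C (a l) := by
    by_cases hl : a l = 0
    · simp [hl]
    rw [Polynomial.C_mul_X_pow_eq_monomial, polyK_monomial, HahnSeries.C_apply,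
      HahnSeries.single_mul_single, HahnSeries.single_mul_single,
      Int.toNat_of_nonneg (sub_nonneg.mpr (hk l hl))]
    simp
  -- scaled by `x ^ (-m k)`, the new column is `G a`, whose reduction mod `x⁻¹` vanishes by `ha`
  have hcoe : (g *ᵥ fun l => polyK Fq (Polynomial.C (a l) * Polynomial.X ^ (m k - m l).toNat)) i *
      HahnSeries.single (m k) 1 = ((G *ᵥ fun l => PowerSeries.C (a l)) i : Kt Fq) := by
    simp only [mulVec, dotProduct, Finset.sum_mul, mul_assoc, hterm]
    simp only [map_sum, map_mul, hG, PowerSeries.coe_C, mul_assoc]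
  have hres : PowerSeries.constantCoeff ((G *ᵥ fun l => PowerSeries.C (a l)) i) = 0 := by
    have hC : (PowerSeries.constantCoeff ∘ fun l => PowerSeries.C (a l)) = a := by
      ext l; simp
    rw [RingHom.map_mulVec, hC]
    exact congrFun ha i
  have h := Kabs_coe_powerSeries_le_inv _ hres
  rw [← hcoe, Kabs_mul, Kabs_single _ one_ne_zero, ← le_div_iff₀ (by positivity),
    ← zpow_sub₀ (by positivity)] at h
  rwa [show (-1 : ℤ) - -m k = m k - 1 by ring] at h

lemma exists_basis_change_of_not_isReducedBasis {g : Matrix (Fin d) (Fin d) (Kt Fq)}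
    (hdet : g.det ≠ 0) (hg : ¬IsReducedBasis g) :
    ∃ B : Matrix (Fin d) (Fin d) (Polynomial Fq), IsUnit B.det ∧
      q * ∏ j, vnorm Fq ((g * B.map (polyK Fq)).col j) ≤ ∏ j, vnorm Fq (g.col j) := by
  choose m hm using fun j => exists_vnorm_eq_zpow (g.col_ne_zero_of_det_ne_zero hdet j)
  obtain ⟨G, hG⟩ := exists_powerSeries_normalization fun i j => hm j ▸ Kabs_le_vnorm (g.col j) i
  obtain ⟨a, ha0, ha⟩ := exists_mulVec_eq_zero_iff.mpr
    (not_not.mp (mt (isReducedBasis_of_det_residue_ne_zero hm hG) hg))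
  obtain ⟨k, hak, hk⟩ := Finset.exists_max_image (Finset.univ.filter (a · ≠ 0)) m
    (by simpa [Finset.filter_nonempty_iff] using Function.ne_iff.mp ha0)
  set p : Fin d → Polynomial Fq := fun l => Polynomial.C (a l) * Polynomial.X ^ (m k - m l).toNat
  refine ⟨(1 : Matrix (Fin d) (Fin d) (Polynomial Fq)).updateCol k p, ?_, ?_⟩
  · rw [← cramer_apply, cramer_one]
    simpa [p] using (Finset.mem_filter.mp hak).2
  · rw [map_updateCol, Matrix.map_one _ (map_zero _) (map_one _), mul_updateCol, mul_one,
      prod_vnorm_col_updateCol, ← Finset.mul_prod_erase _ _ (Finset.mem_univ k), hm k,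
      ← mul_assoc]
    refine mul_le_mul_of_nonneg_right ?_ (Finset.prod_nonneg fun j _ => vnorm_nonneg _)
    calc q * vnorm Fq (g *ᵥ (polyK Fq ∘ p)) ≤ q * q ^ (m k - 1) :=
          mul_le_mul_of_nonneg_left (vnorm_mulVec_le_of_residue hG ha fun l hl =>
            hk l (Finset.mem_filter.mpr ⟨Finset.mem_univ l, hl⟩)) (by positivity)
      _ = q ^ m k := by rw [mul_comm, ← zpow_add_one₀ (by positivity), sub_add_cancel]

lemma exists_isReducedBasis {g : Matrix (Fin d) (Fin d) (Kt Fq)} (hdet : g.det ≠ 0) :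
    ∃ B : Matrix (Fin d) (Fin d) (Polynomial Fq), IsUnit B.det ∧
      IsReducedBasis (g * B.map (polyK Fq)) := by
  obtain ⟨n, hn⟩ := pow_unbounded_of_one_lt
    ((∏ j, vnorm Fq (g.col j)) / Kabs Fq g.det) (one_lt_card_real (Fq := Fq))
  rw [div_lt_iff₀ (Kabs_pos hdet)] at hn
  -- each basis change divides `∏ⱼ ‖gⱼ‖ / |det g|`, which is at least `1`, by `q`
  induction n generalizing g with
  | zero => exact absurd hn (not_lt.mpr (by simpa using Kabs_det_le_prod_vnorm_col g))
  | succ n ih =>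
    by_cases hg : IsReducedBasis g
    · exact ⟨1, by simp, by rwa [Matrix.map_one _ (map_zero _) (map_one _), mul_one]⟩
    obtain ⟨B, hB, hle⟩ := exists_basis_change_of_not_isReducedBasis hdet hg
    have hdetB : Kabs Fq (g * B.map (polyK Fq)).det = Kabs Fq g.det := by
      rw [det_mul, Kabs_mul, Kabs_det_map_polyK hB, mul_one]
    have hdetB0 : (g * B.map (polyK Fq)).det ≠ 0 := fun h0 =>
      (Kabs_pos hdet).ne' (by rw [← hdetB, h0, Kabs_zero])
    have hlt := hle.trans_lt hn
    rw [pow_succ, mul_comm _ q, mul_assoc, ← hdetB] at hlt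
    obtain ⟨B', hB', hred⟩ := ih hdetB0 (lt_of_mul_lt_mul_left hlt (by positivity))
    exact ⟨B * B', by rw [det_mul]; exact hB.mul hB', by rwa [Matrix.map_mul, ← mul_assoc]⟩

end Reduced

section IntegralBases

variable {d : ℕ} {u : Matrix (Fin d) (Fin d) (Kt Fq)}

lemma vnorm_col_le_one (hu : ∀ i j, Kabs Fq (u i j) ≤ 1) (j : Fin d) : vnorm Fq (u.col j) ≤ 1 :=
  vnorm_le zero_le_one fun i => hu i j

lemma one_le_vnorm_col (hu : ∀ i j, Kabs Fq (u i j) ≤ 1) (hdet : Kabs Fq u.det = 1)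
    (k : Fin d) : 1 ≤ vnorm Fq (u.col k) :=
  calc 1 = Kabs Fq u.det := hdet.symm
    _ ≤ ∏ j, vnorm Fq (u.col j) := Kabs_det_le_prod_vnorm_col u
    _ = vnorm Fq (u.col k) * ∏ j ∈ Finset.univ.erase k, vnorm Fq (u.col j) :=
      (Finset.mul_prod_erase _ _ (Finset.mem_univ k)).symm
    _ ≤ vnorm Fq (u.col k) := mul_le_of_le_one_right (vnorm_nonneg _) <|
      Finset.prod_le_one (fun _ _ => vnorm_nonneg _) fun j _ => vnorm_col_le_one hu j

lemma isReducedBasis_of_Kabs_le_one (hu : ∀ i j, Kabs Fq (u i j) ≤ 1)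
    (hdet : Kabs Fq u.det = 1) : IsReducedBasis u :=
  le_antisymm (Kabs_det_le_prod_vnorm_col u) <| hdet ▸
    Finset.prod_le_one (fun _ _ => vnorm_nonneg _) fun j _ => vnorm_col_le_one hu j

lemma one_le_vnorm_of_mem_lattice (hu : ∀ i j, Kabs Fq (u i j) ≤ 1) (hdet : Kabs Fq u.det = 1)
    {v : Fin d → Kt Fq} (hv : v ∈ lattice Fq u) (hv0 : v ≠ 0) : 1 ≤ vnorm Fq v := by
  obtain ⟨c, rfl⟩ := hv
  obtain ⟨k, hk⟩ : ∃ k, c k ≠ 0 := by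
    by_contra! hc
    exact hv0 (by simp only [hc, map_zero]; exact mulVec_zero u)
  exact (one_le_vnorm_col hu hdet k).trans
    ((isReducedBasis_of_Kabs_le_one hu hdet).vnorm_col_le (ne_zero_of_Kabs_eq_one hdet) hk)

end IntegralBases

section WellRounded

variable {d : ℕ}

lemma ell_le_vnorm {Λ : Set (Fin d → Kt Fq)} {v : Fin d → Kt Fq} (hv : v ∈ Λ) (hv0 : v ≠ 0) :
    ell Fq Λ ≤ vnorm Fq v :=
  csInf_le ⟨0, by rintro _ ⟨w, -, -, rfl⟩; exact vnorm_nonneg w⟩ ⟨v, hv, hv0, rfl⟩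

lemma le_ell {Λ : Set (Fin d → Kt Fq)} {r : ℝ} {v : Fin d → Kt Fq} (hv : v ∈ Λ) (hv0 : v ≠ 0)
    (h : ∀ w ∈ Λ, w ≠ 0 → r ≤ vnorm Fq w) : r ≤ ell Fq Λ :=
  le_csInf ⟨_, v, hv, hv0, rfl⟩ (by rintro _ ⟨w, hw, hw0, rfl⟩; exact h w hw hw0)

lemma isWellRounded_lattice {u : Matrix (Fin d) (Fin d) (Kt Fq)}
    (hu : ∀ i j, Kabs Fq (u i j) ≤ 1) (hdet : Kabs Fq u.det = 1) :
    IsWellRounded Fq (lattice Fq u) := by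
  have hdet0 := ne_zero_of_Kabs_eq_one hdet
  refine ⟨u.col, col_mem_lattice u, ?_, fun j => ?_⟩
  · exact linearIndependent_cols_iff_isUnit.mpr ((isUnit_iff_isUnit_det u).mpr hdet0.isUnit)
  have hcol : vnorm Fq (u.col j) = 1 :=
    le_antisymm (vnorm_col_le_one hu j) (one_le_vnorm_col hu hdet j)
  have hmem := col_mem_lattice u j
  have hne := u.col_ne_zero_of_det_ne_zero hdet0 j
  refine le_antisymm ?_ (ell_le_vnorm hmem hne)
  exact hcol ▸ le_ell hmem hne fun w hw hw0 => one_le_vnorm_of_mem_lattice hu hdet hw hw0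

lemma exists_integral_basis_of_isWellRounded {g : Matrix (Fin d) (Fin d) (Kt Fq)}
    (hg : Kabs Fq g.det = 1) (hwr : IsWellRounded Fq (lattice Fq g)) :
    ∃ u : Matrix (Fin d) (Fin d) (Kt Fq),
      (∀ i j, Kabs Fq (u i j) ≤ 1) ∧ Kabs Fq u.det = 1 ∧ lattice Fq g = lattice Fq u := by
  obtain ⟨v, hv, hind, hvL⟩ := hwr
  obtain ⟨B, hB, hred⟩ := exists_isReducedBasis (ne_zero_of_Kabs_eq_one hg)
  set h := g * B.map (polyK Fq)
  have hlat : lattice Fq h = lattice Fq g := lattice_mul_map_polyK g hB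
  have hdet : Kabs Fq h.det = 1 := by rw [det_mul, Kabs_mul, hg, Kabs_det_map_polyK hB, one_mul]
  have hdet0 := ne_zero_of_Kabs_eq_one hdet
  have hv' : ∀ i, v i ∈ lattice Fq h := fun i => hlat ▸ hv i
  choose c hc using hv'
  have hind' : LinearIndependent (Kt Fq) fun i j => polyK Fq (c i j) :=
    LinearIndependent.of_comp h.mulVecLin (by convert hind using 1; ext i : 1; exact (hc i).symm)
  have hcol (k : Fin d) : vnorm Fq (h.col k) = ell Fq (lattice Fq g) := by
    obtain ⟨i, hi⟩ := exists_apply_ne_zero_of_linearIndependent hind' k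
    refine le_antisymm ?_ (ell_le_vnorm (hlat ▸ col_mem_lattice h k)
      (h.col_ne_zero_of_det_ne_zero hdet0 k))
    rw [← hvL i, hc i]
    exact hred.vnorm_col_le hdet0 fun hz => hi (by simp [hz])
  refine ⟨h, fun i j => ?_, hdet, hlat.symm⟩
  have hL : ell Fq (lattice Fq g) ^ d = 1 := by
    rw [← hdet, hred, Finset.prod_congr rfl fun k _ => hcol k, Finset.prod_const,
      Finset.card_univ, Fintype.card_fin]
  calc Kabs Fq (h i j) ≤ vnorm Fq (h.col j) := Kabs_le_vnorm (h.col j) i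
    _ = 1 := (hcol j).trans <|
      (pow_eq_one_iff_of_nonneg (hcol j ▸ vnorm_nonneg _) (Fin.pos j).ne').mp hL

end WellRounded

end

theorem wellRounded_iff {d : ℕ}
    (g : Matrix (Fin d) (Fin d) (Kt Fq)) (hg : Kabs Fq g.det = 1) :
    IsWellRounded Fq (lattice Fq g) ↔
      ∃ u : Matrix (Fin d) (Fin d) (Kt Fq),
        (∀ i j, Kabs Fq (u i j) ≤ 1) ∧ Kabs Fq u.det = 1 ∧
        lattice Fq g = lattice Fq u := by
  refine ⟨exists_integral_basis_of_isWellRounded hg, ?_⟩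
  rintro ⟨u, hu, hdet, hlat⟩
  exact hlat ▸ isWellRounded_lattice hu hdet
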